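/- Let $\mathcal{R} = (r_i)_{i\in I}$ be an infinite pre-Rademacher family in a Boolean algebra $\mathcal{B}$. Then the order closed subalgebra $\mathcal{B}_\tau(\mathcal{R})$ is atomless if and only if for every collection of signs $(\theta_i)_{i\in I}$, either $\inf_{i\in I}\theta_i r_i = \mathbf{0}$ or the infimum $\inf_{i\in I}\theta_i r_i$ does not exist in $\mathcal{B}_\tau(\mathcal{R})$. -/
import Mathlib



/-- The product of a sign by an element of a Boolean algebra: `1 ⬝ x = x`, `(-1) ⬝ x = xᶜ`. -/
def sgn {α : Type*} [BooleanAlgebra α] (θ : Bool) (x : α) : α := if θ then x else xᶜ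

/-- A pre-Rademacher family: a family of distinct elements all of whose finite
particles are nonzero. -/
def IsPreRademacher {α ι : Type*} [BooleanAlgebra α] (r : ι → α) : Prop :=
  Function.Injective r ∧
    ∀ (J : Finset ι) (θ : ι → Bool), J.inf (fun j => sgn (θ j) (r j)) ≠ ⊥

/-- A subset of a Boolean algebra which is a subalgebra. -/
def IsSubalg {α : Type*} [BooleanAlgebra α] (S : Set α) : Prop :=
  ⊥ ∈ S ∧ ⊤ ∈ S ∧ (∀ x ∈ S, xᶜ ∈ S) ∧
    (∀ x ∈ S, ∀ y ∈ S, x ⊔ y ∈ S) ∧ (∀ x ∈ S, ∀ y ∈ S, x ⊓ y ∈ S)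

/-- A set is order closed if it contains all existing suprema of its subsets. -/
def IsOrderClosedSet {α : Type*} [BooleanAlgebra α] (S : Set α) : Prop :=
  ∀ C ⊆ S, ∀ b : α, IsLUB C b → b ∈ S

/-- The smallest order closed subalgebra containing `R`. -/
def tauSubalg {α : Type*} [BooleanAlgebra α] (R : Set α) : Set α :=
  ⋂₀ {S : Set α | IsSubalg S ∧ IsOrderClosedSet S ∧ R ⊆ S}

/-- `a` is an atom of the Boolean algebra structured on the subset `S`. -/
def IsAtomIn {α : Type*} [BooleanAlgebra α] (S : Set α) (a : α) : Prop :=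
  a ∈ S ∧ a ≠ ⊥ ∧ ∀ x ∈ S, x ≤ a → x = ⊥ ∨ x = a

section Aux

variable {α ι : Type*} [BooleanAlgebra α]

lemma tau_subset {R S : Set α} (h1 : IsSubalg S) (h2 : IsOrderClosedSet S) (h3 : R ⊆ S) :
    tauSubalg R ⊆ S :=
  Set.sInter_subset_of_mem ⟨h1, h2, h3⟩

lemma tau_isSubalg (R : Set α) : IsSubalg (tauSubalg R) := by
  refine ⟨?_, ?_, ?_, ?_, ?_⟩
  · exact Set.mem_sInter.2 fun S hS => hS.1.1
  · exact Set.mem_sInter.2 fun S hS => hS.1.2.1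
  · intro x hx
    exact Set.mem_sInter.2 fun S hS => hS.1.2.2.1 x (Set.mem_sInter.1 hx S hS)
  · intro x hx y hy
    exact Set.mem_sInter.2 fun S hS =>
      hS.1.2.2.2.1 x (Set.mem_sInter.1 hx S hS) y (Set.mem_sInter.1 hy S hS)
  · intro x hx y hy
    exact Set.mem_sInter.2 fun S hS =>
      hS.1.2.2.2.2 x (Set.mem_sInter.1 hx S hS) y (Set.mem_sInter.1 hy S hS)

lemma tau_isOrderClosed (R : Set α) : IsOrderClosedSet (tauSubalg R) := by
  intro C hC b hb
  exact Set.mem_sInter.2 fun S hS =>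
    hS.2.1 C (fun c hc => Set.mem_sInter.1 (hC hc) S hS) b hb

lemma tau_superset (R : Set α) : R ⊆ tauSubalg R :=
  fun x hx => Set.mem_sInter.2 fun _ hS => hS.2.2 hx

/-- Every lower bound of a sign-family is below or disjoint from every element of the
τ-subalgebra. -/
lemma dichotomy {r : ι → α} {θ : ι → Bool} {c : α} (hc : ∀ i, c ≤ sgn (θ i) (r i)) :
    ∀ y ∈ tauSubalg (Set.range r), c ≤ y ∨ c ≤ yᶜ := by
  have hS : IsSubalg {y : α | c ≤ y ∨ c ≤ yᶜ} := by
    refine ⟨Or.inr (by simp), Or.inl le_top, ?_, ?_, ?_⟩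
    · rintro x (h | h)
      · right; rwa [compl_compl]
      · left; exact h
    · rintro x (h | h) y hy
      · exact Or.inl (h.trans le_sup_left)
      · rcases hy with h' | h'
        · exact Or.inl (h'.trans le_sup_right)
        · right; rw [compl_sup]; exact le_inf h h'
    · rintro x (h | h) y hy
      · rcases hy with h' | h'
        · exact Or.inl (le_inf h h')
        · right; rw [compl_inf]; exact h'.trans le_sup_right
      · right; rw [compl_inf]; exact h.trans le_sup_left
  have hO : IsOrderClosedSet {y : α | c ≤ y ∨ c ≤ yᶜ} := by
    intro C hC b hb
    by_cases h : ∃ y ∈ C, c ≤ y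
    · obtain ⟨y, hy, hcy⟩ := h
      exact Or.inl (hcy.trans (hb.1 hy))
    · push_neg at h
      right
      rw [le_compl_iff_disjoint_right, disjoint_comm, ← le_compl_iff_disjoint_right]
      refine hb.2 ?_
      intro y hy
      rcases hC hy with h' | h'
      · exact absurd h' (h y hy)
      · exact le_compl_comm.mp h'
  have hr : Set.range r ⊆ {y : α | c ≤ y ∨ c ≤ yᶜ} := by
    rintro _ ⟨i, rfl⟩
    have := hc i
    cases hθ : θ i
    · right; simpa [sgn, hθ] using this
    · left; simpa [sgn, hθ] using this
  intro y hy
  exact tau_subset hS hO hr hy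

lemma lb_compl_iff_not_le {r : ι → α} {θ : ι → Bool} {c : α} (hc0 : c ≠ ⊥)
    (hc : ∀ i, c ≤ sgn (θ i) (r i)) {y : α} (hy : y ∈ tauSubalg (Set.range r)) :
    c ≤ yᶜ ↔ ¬ c ≤ y := by
  constructor
  · intro h h'
    exact hc0 (le_bot_iff.1 ((le_inf h' h).trans inf_compl_eq_bot.le))
  · intro h
    rcases dichotomy hc y hy with h' | h'
    · exact absurd h' h
    · exact h'

lemma sup_dir {r : ι → α} {θ : ι → Bool} {c d x y : α}
    (hc0 : c ≠ ⊥) (hc : ∀ i, c ≤ sgn (θ i) (r i))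
    (hxT : x ∈ tauSubalg (Set.range r))
    (hx : c ≤ x → d ≤ x) (hy : c ≤ y → d ≤ y) (h : c ≤ x ⊔ y) : d ≤ x ⊔ y := by
  by_cases hcx : c ≤ x
  · exact (hx hcx).trans le_sup_left
  · have h1 : c ≤ xᶜ := (lb_compl_iff_not_le hc0 hc hxT).2 hcx
    have hcy : c ≤ y := by
      have h2 : (x ⊔ y) ⊓ xᶜ ≤ y := by
        rw [inf_sup_right]
        simp
      exact (le_inf h h1).trans h2
    exact (hy hcy).trans le_sup_right

/-- Two nonzero lower bounds (in the τ-subalgebra) of the same sign-family are comparable. -/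
lemma lb_le {r : ι → α} {θ : ι → Bool} {a b : α}
    (ha0 : a ≠ ⊥) (hb0 : b ≠ ⊥)
    (haT : a ∈ tauSubalg (Set.range r)) (hbT : b ∈ tauSubalg (Set.range r))
    (ha : ∀ i, a ≤ sgn (θ i) (r i)) (hb : ∀ i, b ≤ sgn (θ i) (r i)) :
    a ≤ b := by
  set T := tauSubalg (Set.range r) with hT
  set D : Set α := {y | y ∈ T ∧ (b ≤ y ↔ a ≤ y)} with hD
  have hDT : ∀ y ∈ D, y ∈ T := fun y hy => hy.1
  have TS := tau_isSubalg (Set.range r)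
  have hS : IsSubalg D := by
    refine ⟨⟨TS.1, ?_⟩, ⟨TS.2.1, by simp⟩, ?_, ?_, ?_⟩
    · constructor
      · intro h; exact absurd (le_bot_iff.1 h) hb0
      · intro h; exact absurd (le_bot_iff.1 h) ha0
    · rintro x ⟨hxT, hx⟩
      refine ⟨TS.2.2.1 x hxT, ?_⟩
      rw [lb_compl_iff_not_le hb0 hb hxT, lb_compl_iff_not_le ha0 ha hxT, hx]
    · rintro x ⟨hxT, hx⟩ y ⟨hyT, hy⟩
      refine ⟨TS.2.2.2.1 x hxT y hyT, ?_⟩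
      constructor
      · exact sup_dir hb0 hb hxT hx.mp hy.mp
      · exact sup_dir ha0 ha hxT hx.mpr hy.mpr
    · rintro x ⟨hxT, hx⟩ y ⟨hyT, hy⟩
      refine ⟨TS.2.2.2.2 x hxT y hyT, ?_⟩
      rw [le_inf_iff, le_inf_iff, hx, hy]
  have hO : IsOrderClosedSet D := by
    intro C hC u hu
    refine ⟨tau_isOrderClosed (Set.range r) C (fun c hc => (hC hc).1) u hu, ?_⟩
    by_cases hex : ∃ y ∈ C, a ≤ y
    · obtain ⟨y, hyC, hay⟩ := hex
      have hby : b ≤ y := (hC hyC).2.mpr hay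
      exact iff_of_true (hby.trans (hu.1 hyC)) (hay.trans (hu.1 hyC))
    · push_neg at hex
      have hna : u ≤ aᶜ := by
        refine hu.2 fun y hy => le_compl_comm.mp ?_
        exact (lb_compl_iff_not_le ha0 ha (hC hy).1).2 (hex y hy)
      have hnb : u ≤ bᶜ := by
        refine hu.2 fun y hy => le_compl_comm.mp ?_
        exact (lb_compl_iff_not_le hb0 hb (hC hy).1).2 fun h => hex y hy ((hC hy).2.mp h)
      refine iff_of_false (fun hh => hb0 ?_) (fun hh => ha0 ?_)
      · exact le_bot_iff.1 ((le_inf le_rfl (hh.trans hnb)).trans inf_compl_eq_bot.le)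
      · exact le_bot_iff.1 ((le_inf le_rfl (hh.trans hna)).trans inf_compl_eq_bot.le)
  have hr : Set.range r ⊆ D := by
    rintro _ ⟨i, rfl⟩
    refine ⟨tau_superset _ ⟨i, rfl⟩, ?_⟩
    have hai := ha i
    have hbi := hb i
    cases hθ : θ i
    · simp only [sgn, hθ, if_neg Bool.false_ne_true] at hai hbi
      exact iff_of_false ((lb_compl_iff_not_le hb0 hb (tau_superset _ ⟨i, rfl⟩)).1 hbi)
        ((lb_compl_iff_not_le ha0 ha (tau_superset _ ⟨i, rfl⟩)).1 hai)
    · simp only [sgn, hθ, if_true] at hai hbi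
      exact iff_of_true hbi hai
  have : b ∈ D := tau_subset hS hO hr hbT
  exact this.2.mp le_rfl

end Aux

/-- `𝓑_τ(𝓡)` is atomless iff for every collection of signs, the infimum
`⋂ᵢ θᵢ rᵢ` (computed within `𝓑_τ(𝓡)`) either equals `⊥` or does not exist. -/
theorem stmt4 {α ι : Type*} [BooleanAlgebra α] [Infinite ι] (r : ι → α)
    (hR : IsPreRademacher r) :
    (∀ a : α, ¬ IsAtomIn (tauSubalg (Set.range r)) a) ↔
      ∀ θ : ι → Bool, ∀ a ∈ tauSubalg (Set.range r),
        (∀ i, a ≤ sgn (θ i) (r i)) →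
        (∀ x ∈ tauSubalg (Set.range r), (∀ i, x ≤ sgn (θ i) (r i)) → x ≤ a) →
        a = ⊥ := by
  constructor
  · intro hatomless θ a haT ha _hglb
    by_contra ha0
    refine hatomless a ⟨haT, ha0, fun x hxT hxa => ?_⟩
    rcases dichotomy ha x hxT with h | h
    · exact Or.inr (le_antisymm hxa h)
    · left
      have : x ≤ aᶜ := le_compl_comm.mp h
      exact le_bot_iff.1 ((le_inf hxa this).trans inf_compl_eq_bot.le)
  · intro h a hatom
    obtain ⟨haT, ha0, hmin⟩ := hatom
    classical
    set θ : ι → Bool := fun i => decide (a ≤ r i) with hθdef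
    have hriT : ∀ i, r i ∈ tauSubalg (Set.range r) := fun i => tau_superset _ ⟨i, rfl⟩
    have ha : ∀ i, a ≤ sgn (θ i) (r i) := by
      intro i
      by_cases hle : a ≤ r i
      · simp [sgn, hθdef, hle]
      · have hinfT : a ⊓ r i ∈ tauSubalg (Set.range r) :=
          (tau_isSubalg _).2.2.2.2 a haT (r i) (hriT i)
        rcases hmin (a ⊓ r i) hinfT inf_le_left with h0 | h0
        · have : a ≤ (r i)ᶜ := by
            rwa [le_compl_iff_disjoint_right, disjoint_iff]
          simpa [sgn, hθdef, hle] using this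
        · exact absurd (by rw [← h0]; exact inf_le_right) hle
    have hglb : ∀ x ∈ tauSubalg (Set.range r), (∀ i, x ≤ sgn (θ i) (r i)) → x ≤ a := by
      intro x hxT hx
      by_cases hx0 : x = ⊥
      · simp [hx0]
      · exact lb_le hx0 ha0 hxT haT hx ha
    exact ha0 (h θ a haT ha hglb)
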